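/- arXiv:math/0502134 — 3 statements merged into one kernel-verified Lean document; each statement's English description precedes it below -/
import Mathlib

section
/- For every integer n ≥ 0 and every w ∈ ℤ_p, the sequence N ↦ ((1−u)/(1−u^{p^N}))^r · Σ_{x_1=0}^{p^N−1} ⋯ Σ_{x_r=0}^{p^N−1} [w + a_1x_1 + ⋯ + a_rx_r : q]^n · u^{x_1+⋯+x_r} converges in ℂ_p as N → ∞, and its limit equals H_n^{(r)}(w,u,q|a_1,…,a_r) = (1−u)^r (1−q)^{−n} Σ_{l=0}^n binom(n,l) (−1)^l q^{lw} Π_{j=1}^r (1−q^{l·a_j}u)^{−1}. -/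
open Filter Finset

/-- For `q` in a normed field and a `p`-adic integer `z`, the power `q^z`, defined as the
limit of `q^(z mod p^N)` (for convergent `q` this agrees with `exp_p (z · log_p q)`). -/
noncomputable def qpow {p : ℕ} [Fact p.Prime] {K : Type*} [NormedField K] (q : K) (z : ℤ_[p]) :
    K :=
  limUnder atTop fun N : ℕ => q ^ (z.appr N)

/-- The `q`-number `[z : q] = (1 - q^z)/(1 - q)` for a `p`-adic integer `z`. -/
noncomputable def qnum {p : ℕ} [Fact p.Prime] {K : Type*} [NormedField K] (q : K) (z : ℤ_[p]) :
    K :=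
  (1 - qpow q z) / (1 - q)

/-- The `q`-analogue of the Euler–Barnes polynomial
`H_n^{(r)}(w, u, q | a_1, …, a_r)
  = (1-u)^r (1-q)^{-n} ∑_{l=0}^n C(n,l) (-1)^l q^{lw} ∏_j (1 - q^{l a_j} u)⁻¹`. -/
noncomputable def qEulerBarnes {p : ℕ} [Fact p.Prime] {K : Type*} [NormedField K]
    (r n : ℕ) (w : ℤ_[p]) (u q : K) (a : Fin r → ℤ_[p]) : K :=
  (1 - u) ^ r * ((1 - q)⁻¹) ^ n *
    ∑ l ∈ Finset.range (n + 1),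
      (n.choose l : K) * (-1) ^ l * qpow q ((l : ℤ_[p]) * w) *
        ∏ j, (1 - qpow q ((l : ℤ_[p]) * a j) * u)⁻¹

/-!
Expanding `(1 - q^{w + Σ a_j x_j})^n` binomially, with `q^{w + Σ a_j x_j} = q^w ∏ (q^{a_j})^{x_j}`,
makes the sum over the box `[0, p^N)^r` factor into geometric sums, so that the `l`-th term carries
`∏_j (1 - u)/(1 - u^{p^N}) · (1 - (q^{l a_j} u)^{p^N})/(1 - q^{l a_j} u)`.
Because `|1 - q| < p^{-1/(p-1)}`, raising an `x` with `|1 - x| ≤ |1 - q|` to the `p`-th power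
shrinks `|1 - x|` by a factor `p` (the middle binomial coefficients are divisible by `p`). Hence
`n ↦ q^n` is `|1 - q|`-Lipschitz for the `p`-adic metric, which makes `z ↦ q^z` well defined,
multiplicative and continuous, and `(q^{l a_j})^{p^N} = q^{p^N l a_j} → 1`. Finally
`|1 - u^{p^N}| ≥ 1` bounds `|u^{p^N} / (1 - u^{p^N})|` by `1`, so each ratio
`(1 - (q^{l a_j} u)^{p^N})/(1 - u^{p^N})` tends to `1`.
-/

open Topology

lemma pow_sub_one_le_inv_of_lt_rpow {p : ℕ} (hp : 1 < p) {x : ℝ} (hx0 : 0 ≤ x)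
    (hx : x < (p : ℝ) ^ (-(1 : ℝ) / ((p : ℝ) - 1))) : x ^ (p - 1) ≤ (p : ℝ)⁻¹ := by
  have hp' : (1 : ℝ) < p := by exact_mod_cast hp
  calc x ^ (p - 1) ≤ ((p : ℝ) ^ (-(1 : ℝ) / ((p : ℝ) - 1))) ^ (p - 1) :=
        pow_le_pow_left₀ hx0 hx.le _
    _ = (p : ℝ)⁻¹ := by
      rw [← Real.rpow_natCast, ← Real.rpow_mul (by positivity), Nat.cast_sub hp.le, Nat.cast_one,
        div_mul_cancel₀ _ (by linarith), Real.rpow_neg_one]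

lemma one_sub_pow_eq_sum {R : Type*} [CommRing R] (x : R) (n : ℕ) :
    (1 - x) ^ n = ∑ l ∈ range (n + 1), (n.choose l : R) * (-1) ^ l * x ^ l := by
  rw [sub_eq_neg_add, add_pow]
  refine sum_congr rfl fun l _ => ?_
  rw [one_pow, neg_pow]
  ring

section Ultrametric

variable {K : Type*} [NormedField K] [IsUltrametricDist K]

lemma norm_eq_one_of_norm_one_sub_lt_one {x : K} (hx : ‖1 - x‖ < 1) : ‖x‖ = 1 := by
  have h := IsUltrametricDist.norm_add_eq_max_of_norm_ne_norm
    (x := (1 : K)) (y := -(1 - x)) (by rw [norm_one, norm_neg]; exact hx.ne')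
  rwa [← sub_eq_add_neg, sub_sub_cancel, norm_one, norm_neg, max_eq_left hx.le] at h

lemma norm_le_norm_one_sub {x : K} (hx : 1 ≤ ‖1 - x‖) : ‖x‖ ≤ ‖1 - x‖ := by
  have h := IsUltrametricDist.norm_add_le_max (1 : K) (-(1 - x))
  rwa [← sub_eq_add_neg, sub_sub_cancel, norm_one, norm_neg, max_eq_right hx] at h

lemma norm_one_sub_pow_le {x : K} (hx : ‖x‖ ≤ 1) (m : ℕ) : ‖1 - x ^ m‖ ≤ ‖1 - x‖ := by
  rw [← mul_neg_geom_sum, norm_mul]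
  refine mul_le_of_le_one_right (norm_nonneg _) ?_
  refine IsUltrametricDist.norm_sum_le_of_forall_le_of_nonneg zero_le_one fun i _ => ?_
  rw [norm_pow]
  exact pow_le_one₀ (norm_nonneg _) hx

lemma mul_ne_one_of_norm_one_sub_lt_one {b u : K} (hb : ‖1 - b‖ < 1) (hu : 1 ≤ ‖1 - u‖) :
    b * u ≠ 1 := by
  intro hbu
  have hb1 := norm_eq_one_of_norm_one_sub_lt_one hb
  have hu1 : ‖u‖ = 1 := by simpa [hb1] using congrArg norm hbu
  have : ‖1 - u‖ = ‖1 - b‖ :=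
    calc ‖1 - u‖ = ‖(b - 1) * u‖ := by rw [sub_one_mul, hbu]
      _ = ‖1 - b‖ := by rw [norm_mul, hu1, mul_one, norm_sub_rev]
  linarith

lemma tendsto_one_sub_mul_div_one_sub {x y : ℕ → K} (hx : Tendsto x atTop (𝓝 1))
    (hy : ∀ N, 1 ≤ ‖1 - y N‖) :
    Tendsto (fun N => (1 - x N * y N) / (1 - y N)) atTop (𝓝 1) := by
  have hbound : ∀ N, ‖(1 - x N * y N) / (1 - y N) - 1‖ ≤ ‖1 - x N‖ := by
    intro N
    have hpos : 0 < ‖1 - y N‖ := one_pos.trans_le (hy N)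
    rw [div_sub_one (norm_pos_iff.1 hpos), show 1 - x N * y N - (1 - y N) = (1 - x N) * y N by ring,
      norm_div, norm_mul, div_le_iff₀ hpos]
    exact mul_le_mul_of_nonneg_left (norm_le_norm_one_sub (hy N)) (norm_nonneg _)
  rw [tendsto_iff_norm_sub_tendsto_zero] at hx ⊢
  exact squeeze_zero (fun _ => norm_nonneg _) hbound (by simpa only [norm_sub_rev] using hx)

lemma tendsto_div_mul_geom_sum {b u : K}
    {M : ℕ → ℕ} (hb : Tendsto (fun N => b ^ M N) atTop (𝓝 1)) (hu : ∀ N, 1 ≤ ‖1 - u ^ M N‖)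
    (hbu : b * u ≠ 1) :
    Tendsto (fun N => (1 - u) / (1 - u ^ M N) * ∑ i ∈ range (M N), (b * u) ^ i) atTop
      (𝓝 ((1 - u) * (1 - b * u)⁻¹)) := by
  have hbu' : 1 - b * u ≠ 0 := sub_ne_zero.2 hbu.symm
  have heq : ∀ N, (1 - u) / (1 - u ^ M N) * ∑ i ∈ range (M N), (b * u) ^ i =
      (1 - u) * ((1 - b ^ M N * u ^ M N) / (1 - u ^ M N)) * (1 - b * u)⁻¹ := by
    intro N
    rw [← mul_pow, ← mul_neg_geom_sum (b * u), mul_div_assoc, mul_left_comm,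
      mul_comm _ (1 - b * u)⁻¹, ← mul_assoc, inv_mul_cancel₀ hbu']
    ring
  simp_rw [heq]
  simpa using (tendsto_one_sub_mul_div_one_sub hb hu).const_mul (1 - u) |>.mul_const _

end Ultrametric

section PrimePower

variable {p : ℕ} [hp : Fact p.Prime] {K : Type*} [NormedField K] [IsUltrametricDist K]

lemma lt_one_of_pow_sub_one_le_inv {x : ℝ} (hx : 0 ≤ x) (h : x ^ (p - 1) ≤ (p : ℝ)⁻¹) :
    x < 1 := by
  refine (pow_lt_one_iff_of_nonneg hx (by have := hp.out.two_le; omega)).1 (h.trans_lt ?_)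
  exact inv_lt_one_of_one_lt₀ (by exact_mod_cast hp.out.one_lt)

lemma norm_choose_prime_le (hpK : ‖(p : K)‖ = (p : ℝ)⁻¹) {k : ℕ} (hk0 : k ≠ 0) (hkp : k < p) :
    ‖(p.choose k : K)‖ ≤ (p : ℝ)⁻¹ := by
  obtain ⟨d, hd⟩ := hp.out.dvd_choose_self hk0 hkp
  rw [hd, Nat.cast_mul, norm_mul, hpK]
  exact mul_le_of_le_one_right (by positivity) (IsUltrametricDist.norm_natCast_le_one K d)

lemma norm_one_sub_pow_prime_le (hpK : ‖(p : K)‖ = (p : ℝ)⁻¹) {x : K}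
    (hx : ‖1 - x‖ ^ (p - 1) ≤ (p : ℝ)⁻¹) : ‖1 - x ^ p‖ ≤ (p : ℝ)⁻¹ * ‖1 - x‖ := by
  set t := 1 - x
  have ht : ‖t‖ ≤ 1 := (lt_one_of_pow_sub_one_le_inv (norm_nonneg _) hx).le
  have hexp : 1 - x ^ p = -∑ m ∈ range p, (-t) ^ (m + 1) * (p.choose (m + 1) : K) := by
    rw [show x = -t + 1 by simp [t], add_pow, sum_range_succ']
    simp
  rw [hexp, norm_neg]
  refine IsUltrametricDist.norm_sum_le_of_forall_le_of_nonneg (by positivity) fun m hm => ?_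
  rw [norm_mul, norm_pow, norm_neg]
  rcases (show m + 1 ≤ p from mem_range.1 hm).eq_or_lt with hmp | hmp
  · rw [hmp, Nat.choose_self, Nat.cast_one, norm_one, mul_one,
      ← pow_sub_one_mul hp.out.ne_zero]
    exact mul_le_mul_of_nonneg_right hx (norm_nonneg _)
  · rw [mul_comm]
    exact mul_le_mul (norm_choose_prime_le hpK m.succ_ne_zero hmp)
      (pow_le_of_le_one (norm_nonneg _) ht m.succ_ne_zero)
      (by positivity) (by positivity)

lemma norm_one_sub_pow_prime_pow_le (hpK : ‖(p : K)‖ = (p : ℝ)⁻¹) {x : K}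
    (hx : ‖1 - x‖ ^ (p - 1) ≤ (p : ℝ)⁻¹) (N : ℕ) :
    ‖1 - x ^ p ^ N‖ ≤ (p : ℝ)⁻¹ ^ N * ‖1 - x‖ := by
  induction N with
  | zero => simp
  | succ N ih =>
    have hle : ‖1 - x ^ p ^ N‖ ≤ ‖1 - x‖ :=
      ih.trans (mul_le_of_le_one_left (norm_nonneg _)
        (pow_le_one₀ (by positivity) (inv_le_one_of_one_le₀ (by exact_mod_cast hp.out.one_le))))
    calc ‖1 - x ^ p ^ (N + 1)‖ = ‖1 - (x ^ p ^ N) ^ p‖ := by rw [pow_succ, pow_mul]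
      _ ≤ (p : ℝ)⁻¹ * ‖1 - x ^ p ^ N‖ :=
        norm_one_sub_pow_prime_le hpK ((pow_le_pow_left₀ (norm_nonneg _) hle _).trans hx)
      _ ≤ (p : ℝ)⁻¹ * ((p : ℝ)⁻¹ ^ N * ‖1 - x‖) := by gcongr
      _ = (p : ℝ)⁻¹ ^ (N + 1) * ‖1 - x‖ := by ring

lemma norm_pow_sub_pow_le (hpK : ‖(p : K)‖ = (p : ℝ)⁻¹) {x : K}
    (hx : ‖1 - x‖ ^ (p - 1) ≤ (p : ℝ)⁻¹) (a b : ℕ) :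
    ‖x ^ a - x ^ b‖ ≤ ‖1 - x‖ * ‖(a : ℤ_[p]) - b‖ := by
  wlog hba : b ≤ a generalizing a b
  · rw [norm_sub_rev, norm_sub_rev (a : ℤ_[p])]
    exact this b a (by omega)
  have hx1 : ‖x‖ = 1 :=
    norm_eq_one_of_norm_one_sub_lt_one (lt_one_of_pow_sub_one_le_inv (norm_nonneg _) hx)
  obtain ⟨k, rfl⟩ := Nat.exists_eq_add_of_le hba
  rw [pow_add, show x ^ b * x ^ k - x ^ b = -(x ^ b * (1 - x ^ k)) by ring, norm_neg, norm_mul,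
    norm_pow, hx1, one_pow, one_mul, Nat.cast_add, add_sub_cancel_left]
  rcases eq_or_ne k 0 with rfl | hk
  · simp
  obtain ⟨v, m, hpm, rfl⟩ := Nat.exists_eq_pow_mul_and_not_dvd hk p hp.out.ne_one
  have hm : ‖(m : ℤ_[p])‖ = 1 :=
    PadicInt.norm_natCast_eq_one_iff.2 ((Nat.Prime.coprime_iff_not_dvd hp.out).2 hpm)
  calc ‖1 - x ^ (p ^ v * m)‖ = ‖1 - (x ^ p ^ v) ^ m‖ := by rw [pow_mul]
    _ ≤ ‖1 - x ^ p ^ v‖ := norm_one_sub_pow_le (by rw [norm_pow, hx1, one_pow]) m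
    _ ≤ (p : ℝ)⁻¹ ^ v * ‖1 - x‖ := norm_one_sub_pow_prime_pow_le hpK hx v
    _ = ‖1 - x‖ * ‖((p ^ v * m : ℕ) : ℤ_[p])‖ := by
      rw [Nat.cast_mul, Nat.cast_pow, norm_mul, hm, norm_pow, PadicInt.norm_p]
      ring

lemma cauchySeq_pow_of_tendsto {q : K} (hpK : ‖(p : K)‖ = (p : ℝ)⁻¹)
    (hq : ‖1 - q‖ ^ (p - 1) ≤ (p : ℝ)⁻¹) {A : ℕ → ℕ} {z : ℤ_[p]}
    (hA : Tendsto (fun N => (A N : ℤ_[p])) atTop (𝓝 z)) : CauchySeq fun N => q ^ A N := by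
  obtain ⟨b, hb0, hb, hlim⟩ := cauchySeq_iff_le_tendsto_0.1 hA.cauchySeq
  refine cauchySeq_iff_le_tendsto_0.2
    ⟨fun N => ‖1 - q‖ * b N, fun N => by have := hb0 N; positivity, fun n m N hn hm => ?_,
      by simpa using hlim.const_mul ‖1 - q‖⟩
  rw [dist_eq_norm]
  refine (norm_pow_sub_pow_le hpK hq _ _).trans (mul_le_mul_of_nonneg_left ?_ (norm_nonneg _))
  simpa only [dist_eq_norm] using hb n m N hn hm

end PrimePower

lemma PadicInt.tendsto_appr {p : ℕ} [Fact p.Prime] (z : ℤ_[p]) :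
    Tendsto (fun N => (z.appr N : ℤ_[p])) atTop (𝓝 z) := by
  have hp : Tendsto (fun N => ‖(p : ℤ_[p]) ^ N‖) atTop (𝓝 0) := by
    simpa using (tendsto_pow_atTop_nhds_zero_of_norm_lt_one
      (PadicInt.norm_lt_one_iff_dvd (p : ℤ_[p]) |>.2 dvd_rfl)).norm
  rw [tendsto_iff_norm_sub_tendsto_zero]
  refine squeeze_zero (fun _ => norm_nonneg _) (fun N => ?_) hp
  rw [norm_sub_rev, PadicInt.norm_p_pow, PadicInt.norm_le_pow_iff_mem_span_pow]
  exact z.appr_spec N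

section QPow

variable {p : ℕ} [Fact p.Prime] {K : Type*} [NormedField K] [IsUltrametricDist K]
  [CompleteSpace K] {q : K}

lemma tendsto_pow_qpow (hpK : ‖(p : K)‖ = (p : ℝ)⁻¹)
    (hq : ‖1 - q‖ ^ (p - 1) ≤ (p : ℝ)⁻¹) {A : ℕ → ℕ} {z : ℤ_[p]}
    (hA : Tendsto (fun N => (A N : ℤ_[p])) atTop (𝓝 z)) :
    Tendsto (fun N => q ^ A N) atTop (𝓝 (qpow q z)) := by
  have happr := PadicInt.tendsto_appr z
  refine (cauchySeq_pow_of_tendsto hpK hq happr).tendsto_limUnder.congr_dist ?_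
  refine squeeze_zero (fun _ => dist_nonneg) (fun N => ?_)
    (by simpa using (happr.dist hA).const_mul ‖1 - q‖)
  rw [dist_eq_norm, dist_eq_norm]
  exact norm_pow_sub_pow_le hpK hq _ _

lemma qpow_zero (hpK : ‖(p : K)‖ = (p : ℝ)⁻¹)
    (hq : ‖1 - q‖ ^ (p - 1) ≤ (p : ℝ)⁻¹) : qpow q (0 : ℤ_[p]) = 1 :=
  tendsto_nhds_unique (tendsto_pow_qpow hpK hq (A := fun _ => 0) (by simp)) (by simp)

lemma qpow_add (hpK : ‖(p : K)‖ = (p : ℝ)⁻¹)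
    (hq : ‖1 - q‖ ^ (p - 1) ≤ (p : ℝ)⁻¹) (z₁ z₂ : ℤ_[p]) :
    qpow q (z₁ + z₂) = qpow q z₁ * qpow q z₂ := by
  refine tendsto_nhds_unique (tendsto_pow_qpow hpK hq (A := fun N => z₁.appr N + z₂.appr N)
    (by push_cast; exact (PadicInt.tendsto_appr z₁).add (PadicInt.tendsto_appr z₂))) ?_
  simp_rw [pow_add]
  exact (tendsto_pow_qpow hpK hq (PadicInt.tendsto_appr z₁)).mul
    (tendsto_pow_qpow hpK hq (PadicInt.tendsto_appr z₂))

lemma qpow_natCast_mul (hpK : ‖(p : K)‖ = (p : ℝ)⁻¹)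
    (hq : ‖1 - q‖ ^ (p - 1) ≤ (p : ℝ)⁻¹) (m : ℕ) (z : ℤ_[p]) :
    qpow q ((m : ℤ_[p]) * z) = qpow q z ^ m := by
  refine tendsto_nhds_unique (tendsto_pow_qpow hpK hq (A := fun N => m * z.appr N)
    (by push_cast; exact (PadicInt.tendsto_appr z).const_mul _)) ?_
  simp_rw [pow_mul']
  exact (tendsto_pow_qpow hpK hq (PadicInt.tendsto_appr z)).pow m

lemma qpow_sum (hpK : ‖(p : K)‖ = (p : ℝ)⁻¹)
    (hq : ‖1 - q‖ ^ (p - 1) ≤ (p : ℝ)⁻¹) {ι : Type*} (s : Finset ι) (z : ι → ℤ_[p]) :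
    qpow q (∑ i ∈ s, z i) = ∏ i ∈ s, qpow q (z i) := by
  classical
  induction s using Finset.induction_on with
  | empty => exact qpow_zero hpK hq
  | insert i s hi ih => rw [sum_insert hi, prod_insert hi, qpow_add hpK hq, ih]

lemma lipschitzWith_qpow (hpK : ‖(p : K)‖ = (p : ℝ)⁻¹)
    (hq : ‖1 - q‖ ^ (p - 1) ≤ (p : ℝ)⁻¹) : LipschitzWith ‖1 - q‖₊ (qpow q : ℤ_[p] → K) := by
  refine LipschitzWith.of_dist_le_mul fun z₁ z₂ => ?_
  have happr := PadicInt.tendsto_appr (p := p)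
  rw [dist_eq_norm, dist_eq_norm, coe_nnnorm]
  exact le_of_tendsto_of_tendsto'
    ((tendsto_pow_qpow hpK hq (happr z₁)).sub (tendsto_pow_qpow hpK hq (happr z₂))).norm
    (((happr z₁).sub (happr z₂)).norm.const_mul _) fun N => norm_pow_sub_pow_le hpK hq _ _

lemma norm_one_sub_qpow_lt_one (hpK : ‖(p : K)‖ = (p : ℝ)⁻¹)
    (hq : ‖1 - q‖ ^ (p - 1) ≤ (p : ℝ)⁻¹) (z : ℤ_[p]) : ‖1 - qpow q z‖ < 1 :=
  calc ‖1 - qpow q z‖ = dist (qpow q 0) (qpow q z) := by rw [qpow_zero hpK hq, dist_eq_norm]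
    _ ≤ ‖1 - q‖ * dist 0 z := (lipschitzWith_qpow hpK hq).dist_le_mul _ _
    _ ≤ ‖1 - q‖ := by
      rw [dist_zero_left]; exact mul_le_of_le_one_right (norm_nonneg _) z.norm_le_one
    _ < 1 := lt_one_of_pow_sub_one_le_inv (norm_nonneg _) hq

lemma tendsto_qpow_pow_prime_pow (hpK : ‖(p : K)‖ = (p : ℝ)⁻¹)
    (hq : ‖1 - q‖ ^ (p - 1) ≤ (p : ℝ)⁻¹) (z : ℤ_[p]) :
    Tendsto (fun N => qpow q z ^ p ^ N) atTop (𝓝 1) := by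
  have hpz : Tendsto (fun N => (p : ℤ_[p]) ^ N * z) atTop (𝓝 0) := by
    simpa using (tendsto_pow_atTop_nhds_zero_of_norm_lt_one
      (PadicInt.norm_lt_one_iff_dvd (p : ℤ_[p]) |>.2 dvd_rfl)).mul_const z
  simp_rw [← qpow_natCast_mul hpK hq, Nat.cast_pow]
  rw [← qpow_zero hpK hq]
  exact ((lipschitzWith_qpow hpK hq).continuous.tendsto 0).comp hpz

end QPow

section EulerBarnes

variable {p : ℕ} [Fact p.Prime] {K : Type*} [NormedField K] [IsUltrametricDist K]
  [CompleteSpace K] {q : K}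

lemma qnum_pow_mul_pow_eq (hpK : ‖(p : K)‖ = (p : ℝ)⁻¹)
    (hq : ‖1 - q‖ ^ (p - 1) ≤ (p : ℝ)⁻¹) {r : ℕ} (n : ℕ) (w : ℤ_[p]) (u : K)
    (a : Fin r → ℤ_[p]) (x : Fin r → ℕ) :
    qnum q (w + ∑ j, a j * (x j : ℤ_[p])) ^ n * u ^ (∑ j, x j) =
      ((1 - q)⁻¹) ^ n * ∑ l ∈ range (n + 1), (n.choose l : K) * (-1) ^ l *
        qpow q ((l : ℤ_[p]) * w) * ∏ j, (qpow q ((l : ℤ_[p]) * a j) * u) ^ x j := by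
  have hQ : qpow q (w + ∑ j, a j * (x j : ℤ_[p])) = qpow q w * ∏ j, qpow q (a j) ^ x j := by
    simp_rw [qpow_add hpK hq, qpow_sum hpK hq, mul_comm (a _), qpow_natCast_mul hpK hq]
  rw [qnum, hQ, div_pow, div_eq_inv_mul, ← inv_pow, one_sub_pow_eq_sum, mul_assoc, sum_mul]
  congr 1
  refine sum_congr rfl fun l _ => ?_
  have hfactor : ∀ j, (qpow q (a j) ^ l * u) ^ x j = (qpow q (a j) ^ x j) ^ l * u ^ x j :=
    fun j => by ring
  simp_rw [qpow_natCast_mul hpK hq, hfactor, prod_mul_distrib, prod_pow, prod_pow_eq_pow_sum]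
  ring

lemma sum_piFinset_qnum_pow_mul_pow_eq (hpK : ‖(p : K)‖ = (p : ℝ)⁻¹)
    (hq : ‖1 - q‖ ^ (p - 1) ≤ (p : ℝ)⁻¹) {r : ℕ} (n : ℕ) (w : ℤ_[p]) (u : K)
    (a : Fin r → ℤ_[p]) (c : K) (M : ℕ) :
    c ^ r * ∑ x ∈ Fintype.piFinset fun _ : Fin r => range M,
        qnum q (w + ∑ j, a j * (x j : ℤ_[p])) ^ n * u ^ (∑ j, x j) =
      ((1 - q)⁻¹) ^ n * ∑ l ∈ range (n + 1), (n.choose l : K) * (-1) ^ l *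
        qpow q ((l : ℤ_[p]) * w) *
          ∏ j, (c * ∑ i ∈ range M, (qpow q ((l : ℤ_[p]) * a j) * u) ^ i) := by
  simp_rw [qnum_pow_mul_pow_eq hpK hq, ← mul_sum]
  rw [sum_comm, mul_left_comm, mul_sum]
  congr 1
  refine sum_congr rfl fun l _ => ?_
  rw [← mul_sum, sum_prod_piFinset, prod_mul_distrib, prod_const, card_univ, Fintype.card_fin]
  ring

end EulerBarnes

lemma qEulerBarnes_eq_sum_prod {p : ℕ} [Fact p.Prime] {K : Type*} [NormedField K]
    (r n : ℕ) (w : ℤ_[p]) (u q : K) (a : Fin r → ℤ_[p]) :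
    qEulerBarnes r n w u q a = ((1 - q)⁻¹) ^ n * ∑ l ∈ range (n + 1), (n.choose l : K) * (-1) ^ l *
      qpow q ((l : ℤ_[p]) * w) * ∏ j, ((1 - u) * (1 - qpow q ((l : ℤ_[p]) * a j) * u)⁻¹) := by
  simp_rw [qEulerBarnes, prod_mul_distrib, prod_const, card_univ, Fintype.card_fin, mul_sum]
  exact sum_congr rfl fun l _ => by ring

theorem tendsto_qEulerBarnes_sum_general
    {p : ℕ} [Fact p.Prime] {K : Type*} [NormedField K] [CompleteSpace K]
    [IsUltrametricDist K] (hpK : ‖(p : K)‖ = (p : ℝ)⁻¹)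
    (r : ℕ) (a : Fin r → ℤ_[p])
    (u q : K) (hu : ∀ f : ℕ, 1 ≤ f → 1 ≤ ‖1 - u ^ f‖)
    (hq1 : ‖1 - q‖ < (p : ℝ) ^ (-(1 : ℝ) / ((p : ℝ) - 1)))
    (n : ℕ) (w : ℤ_[p]) :
    Tendsto
      (fun N : ℕ =>
        ((1 - u) / (1 - u ^ p ^ N)) ^ r *
          ∑ x ∈ Fintype.piFinset fun _ : Fin r => Finset.range (p ^ N),
            (qnum q (w + ∑ j, a j * (x j : ℤ_[p]))) ^ n * u ^ (∑ j, x j))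
      atTop (nhds (qEulerBarnes r n w u q a)) := by
  have hp : p.Prime := Fact.out
  have hq := pow_sub_one_le_inv_of_lt_rpow hp.one_lt (norm_nonneg _) hq1
  have hu1 : 1 ≤ ‖1 - u‖ := by simpa using hu 1 le_rfl
  have huN : ∀ N, 1 ≤ ‖1 - u ^ p ^ N‖ := fun N => hu _ (Nat.one_le_pow _ _ hp.pos)
  simp_rw [sum_piFinset_qnum_pow_mul_pow_eq hpK hq, qEulerBarnes_eq_sum_prod]
  refine tendsto_const_nhds.mul (tendsto_finsetSum _ fun l _ =>
    tendsto_const_nhds.mul (tendsto_finsetProd _ fun j _ => ?_))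
  exact tendsto_div_mul_geom_sum (tendsto_qpow_pow_prime_pow hpK hq _) huN
    (mul_ne_one_of_norm_one_sub_lt_one (norm_one_sub_qpow_lt_one hpK hq _) hu1)

/-- For every `n ≥ 0` and `w ∈ ℤ_p`, the sequence
`N ↦ ((1-u)/(1-u^{p^N}))^r · ∑_{x_1,…,x_r=0}^{p^N-1} [w + ∑_j a_j x_j : q]^n · u^{∑_j x_j}`
converges, with limit the `q`-Euler–Barnes polynomial `H_n^{(r)}(w,u,q|a_1,…,a_r)`. -/
theorem tendsto_qEulerBarnes_sum
    {p : ℕ} [Fact p.Prime] {K : Type*} [NormedField K] [CompleteSpace K]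
    [IsUltrametricDist K] (hpK : ‖(p : K)‖ = (p : ℝ)⁻¹)
    (r : ℕ) (hr : 1 ≤ r) (a : Fin r → ℤ_[p]) (ha : ∀ j, a j ≠ 0)
    (u q : K) (hu : ∀ f : ℕ, 1 ≤ f → 1 ≤ ‖1 - u ^ f‖)
    (hq0 : 0 < ‖1 - q‖) (hq1 : ‖1 - q‖ < (p : ℝ) ^ (-(1 : ℝ) / ((p : ℝ) - 1)))
    (n : ℕ) (w : ℤ_[p]) :
    Tendsto
      (fun N : ℕ =>
        ((1 - u) / (1 - u ^ p ^ N)) ^ r *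
          ∑ x ∈ Fintype.piFinset fun _ : Fin r => Finset.range (p ^ N),
            (qnum q (w + ∑ j, a j * (x j : ℤ_[p]))) ^ n * u ^ (∑ j, x j))
      atTop (nhds (qEulerBarnes r n w u q a)) :=
  tendsto_qEulerBarnes_sum_general hpK r a u q hu hq1 n w
end

section
/- In the formal power series ring ℂ_p[[t]] one has the identity Σ_{k=0}^∞ H_k^{(r)}(u,q|a_1,…,a_r) · t^k/k! = (1−u)^r · exp(t/(1−q)) · Σ_{j=0}^∞ ( Π_{l=1}^r (1−q^{j·a_l}u)^{−1} ) · (−1)^j (1−q)^{−j} · t^j/j!, where exp(ct) := Σ_{m=0}^∞ c^m t^m/m!. (The factor (−1)^j makes precise the generating-function identity of Theorem 2, whose printed statement omits this sign.) -/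
open Filter Finset

/-- The formal exponential `e^{ct} = ∑_m c^m t^m / m!` as a formal power series. -/
noncomputable def expPS {K : Type*} [Field K] (c : K) : PowerSeries K :=
  PowerSeries.mk fun m => c ^ m / (m.factorial : K)

/-!
With `w = 0` the factor `q^{lw}` is `1`, and writing `c = (1-q)⁻¹` the coefficient
`c^n ∑_l C(n,l) (-1)^l ∏_j (1 - q^{l a_j} u)⁻¹` is the binomial convolution of `c^m` with
`c^l (-1)^l ∏_j (1 - q^{l a_j} u)⁻¹`; binomial convolution is the product of exponential
generating functions. Dividing by `n!` requires characteristic zero, which `|p| = p⁻¹` forces.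
-/

theorem PadicInt.appr_zero {p : ℕ} [Fact p.Prime] (N : ℕ) : (0 : ℤ_[p]).appr N = 0 := by
  induction N with
  | zero => rfl
  | succ n ih => simp [PadicInt.appr, ih]

theorem qpow_zero_s3 {p : ℕ} [Fact p.Prime] {K : Type*} [NormedField K] (q : K) :
    qpow q (0 : ℤ_[p]) = 1 := by
  simp only [qpow, PadicInt.appr_zero, pow_zero]
  exact tendsto_const_nhds.limUnder_eq

/-- In characteristic `ℓ > 0` every natural number `n` satisfies `n ^ ℓ = n`, so its norm is
`0` or `1`. -/
theorem charZero_of_norm_natCast {K : Type*} [NormedDivisionRing K] (n : ℕ)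
    (h0 : ‖(n : K)‖ ≠ 0) (h1 : ‖(n : K)‖ ≠ 1) : CharZero K := by
  obtain ⟨ℓ, hℓ⟩ := CharP.exists K
  rcases CharP.char_is_prime_or_zero K ℓ with hℓ_prime | rfl
  · have := Fact.mk hℓ_prime
    have hfrob : (n : K) ^ ℓ = n := by
      have := congrArg (ZMod.castHom dvd_rfl K) (ZMod.pow_card (n : ZMod ℓ))
      rwa [map_pow, map_natCast] at this
    have hnorm : ‖(n : K)‖ ^ (ℓ - 1) * ‖(n : K)‖ = 1 * ‖(n : K)‖ := by
      rw [← pow_succ, Nat.sub_add_cancel hℓ_prime.one_le, ← norm_pow, hfrob, one_mul]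
    have hpow : ‖(n : K)‖ ^ (ℓ - 1) = 1 := mul_right_cancel₀ h0 hnorm
    rw [pow_eq_one_iff_of_nonneg (norm_nonneg _) (by have := hℓ_prime.two_le; omega)] at hpow
    exact absurd hpow h1
  · exact CharP.charP_to_charZero K

theorem PowerSeries.mk_div_factorial_mul_mk_div_factorial {K : Type*} [Field K] [CharZero K]
    (f g : ℕ → K) :
    (mk fun n => f n / n.factorial) * (mk fun n => g n / n.factorial) =
      mk fun n => (∑ l ∈ range (n + 1), n.choose l * f l * g (n - l)) / n.factorial := by
  ext n
  rw [coeff_mul, Finset.Nat.sum_antidiagonal_eq_sum_range_succ (fun i j =>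
    coeff i (mk fun n => f n / n.factorial) * coeff j (mk fun n => g n / n.factorial)),
    coeff_mk, sum_div]
  refine sum_congr rfl fun l hl => ?_
  have hln : l ≤ n := Nat.lt_succ_iff.mp (mem_range.mp hl)
  simp only [coeff_mk]
  have := n.factorial_ne_zero
  have := l.factorial_ne_zero
  have := (n - l).factorial_ne_zero
  rw [Nat.cast_choose K hln]
  field_simp

theorem qEulerBarnes_zero_eq_sum {p : ℕ} [Fact p.Prime] {K : Type*} [NormedField K]
    (r n : ℕ) (u q : K) (a : Fin r → ℤ_[p]) :
    qEulerBarnes r n 0 u q a = (1 - u) ^ r * ∑ l ∈ range (n + 1), n.choose l *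
      ((∏ j, (1 - qpow q ((l : ℤ_[p]) * a j) * u)⁻¹) * (-1) ^ l * ((1 - q)⁻¹) ^ l) *
        ((1 - q)⁻¹) ^ (n - l) := by
  rw [qEulerBarnes, mul_assoc, mul_sum]
  congr 1
  refine sum_congr rfl fun l hl => ?_
  rw [mul_zero, qpow_zero_s3, ← pow_sub_mul_pow _ (Nat.lt_succ_iff.mp (mem_range.mp hl))]
  ring

theorem qEulerBarnes_generating_function_general
    {p : ℕ} [Fact p.Prime] {K : Type*} [NormedField K] (hpK : ‖(p : K)‖ = (p : ℝ)⁻¹)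
    (r : ℕ) (a : Fin r → ℤ_[p])
    (u q : K) :
    (PowerSeries.mk fun k => qEulerBarnes r k 0 u q a / (k.factorial : K)) =
      PowerSeries.C ((1 - u) ^ r) * expPS ((1 - q)⁻¹) *
        PowerSeries.mk fun j =>
          (∏ l, (1 - qpow q ((j : ℤ_[p]) * a l) * u)⁻¹) * (-1) ^ j * ((1 - q)⁻¹) ^ j /
            (j.factorial : K) := by
  have hp : 1 < (p : ℝ) := by exact_mod_cast (Fact.out : p.Prime).one_lt
  have : CharZero K := charZero_of_norm_natCast p (hpK ▸ (inv_pos.2 (by linarith)).ne')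
    (hpK ▸ (inv_lt_one_of_one_lt₀ hp).ne)
  rw [mul_assoc, mul_comm (expPS _), expPS, PowerSeries.mk_div_factorial_mul_mk_div_factorial]
  ext n
  rw [PowerSeries.coeff_C_mul, PowerSeries.coeff_mk, PowerSeries.coeff_mk, qEulerBarnes_zero_eq_sum,
    mul_div_assoc]

/-- In `ℂ_p⟦t⟧` one has
`∑_k H_k^{(r)}(u,q|a⃗) t^k/k!
  = (1-u)^r · exp(t/(1-q)) · ∑_j (∏_l (1-q^{j a_l}u)⁻¹) (-1)^j (1-q)^{-j} t^j/j!`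
(the generating-function identity of Theorem 2, with the sign `(-1)^j` made explicit). -/
theorem qEulerBarnes_generating_function
    {p : ℕ} [Fact p.Prime] {K : Type*} [NormedField K] [CompleteSpace K]
    [IsUltrametricDist K] (hpK : ‖(p : K)‖ = (p : ℝ)⁻¹)
    (r : ℕ) (hr : 1 ≤ r) (a : Fin r → ℤ_[p]) (ha : ∀ j, a j ≠ 0)
    (u q : K) (hu : ∀ f : ℕ, 1 ≤ f → 1 ≤ ‖1 - u ^ f‖)
    (hq0 : 0 < ‖1 - q‖) (hq1 : ‖1 - q‖ < (p : ℝ) ^ (-(1 : ℝ) / ((p : ℝ) - 1))) :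
    (PowerSeries.mk fun k => qEulerBarnes r k 0 u q a / (k.factorial : K)) =
      PowerSeries.C ((1 - u) ^ r) * expPS ((1 - q)⁻¹) *
        PowerSeries.mk fun j =>
          (∏ l, (1 - qpow q ((j : ℤ_[p]) * a l) * u)⁻¹) * (-1) ^ j * ((1 - q)⁻¹) ^ j /
            (j.factorial : K) :=
  qEulerBarnes_generating_function_general hpK r a u q
end

section
/- (Removing the p-part of the integral.) For every integer k ≥ 0, the limit lim_{N→∞} ((1−u)/(1−u^{d·p^N})) · Σ_{0 ≤ x < dp^N, p∤x} χ(x)·[a_1 x : q]^k · u^x exists in ℂ_p and equals I_χ(k; u, q) − χ(p)·[p:q]^k·((1−u)/(1−u^p))·I_χ(k; u^p, q^p), where I_χ(k; u, q) := lim_{N→∞} ((1−u)/(1−u^{dp^N})) Σ_{x=0}^{dp^N−1} χ(x)[a_1x:q]^k u^x, and I_χ(k; u^p, q^p) is the same limit formed with u replaced by u^p and q by q^p (both limits exist; note |1−(u^p)^f|_p ≥ 1 for all f ≥ 1 and 0 < |1−q^p|_p < p^{−1/(p−1)}, so this is defined). -/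
/-!
Splitting `0 ≤ x < p m` according to whether `p ∣ x`, the units part of the Riemann sum at level
`p m` is the full Riemann sum minus the sum over `x = p y`. Since `q^{p w} = (q^p)^w` and
`u^{p y} = (u^p)^y`, the integrand at `p y` is `χ(p) [p:q]^k · χ(y) [a₁ y : q^p]^k`, and the
prefactor `(1-u)/(1-u^{pm})` factors through `(1-u)/(1-u^p)`; so the sum over multiples of `p` is
`χ(p) [p:q]^k (1-u)/(1-u^p)` times the Riemann sum for `(u^p, q^p)` at level `m`.

The limits exist because the Riemann sums are Cauchy. On the disc `0 < |1 - q| < p^{-1/(p-1)}`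
the linear term dominates the binomial expansion of `(1 + (q - 1))^p`, so `|1 - q^p| = |1 - q|/p`;
hence `|q^a - q^b| ≤ p^{-N} |1 - q|` when `a ≡ b mod p^N`, which makes `z ↦ q^z` well defined and
Lipschitz on `ℤ_p`, and the integrand varies by at most `p^{-N}` on classes mod `d p^N`. As
`|1 - u^f| ≥ 1`, the weights `(1-u) u^x/(1-u^m)` have norm at most `1`, so consecutive Riemann
sums differ by at most `p^{-N}`.
-/

open Filter Finset

open Topology

section Ultrametric

variable {K : Type*} [NormedField K] [IsUltrametricDist K]

lemma norm_pow_sub_pow_le_norm_sub {a b : K} (ha : ‖a‖ ≤ 1) (hb : ‖b‖ ≤ 1) (k : ℕ) :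
    ‖a ^ k - b ^ k‖ ≤ ‖a - b‖ := by
  rw [← geom_sum₂_mul, norm_mul]
  refine mul_le_of_le_one_left (norm_nonneg _) ?_
  refine IsUltrametricDist.norm_sum_le_of_forall_le_of_nonneg zero_le_one fun i _ => ?_
  rw [norm_mul, norm_pow, norm_pow]
  exact mul_le_one₀ (pow_le_one₀ (norm_nonneg _) ha) (by positivity)
    (pow_le_one₀ (norm_nonneg _) hb)

lemma norm_le_one_of_norm_one_sub_le_one {q : K} (h : ‖1 - q‖ ≤ 1) : ‖q‖ ≤ 1 := by
  have := IsUltrametricDist.norm_add_le_max (1 : K) (-(1 - q))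
  rw [norm_neg, norm_one] at this
  simpa using this.trans (max_le le_rfl h)

end Ultrametric

lemma rpow_neg_inv_pred_lt_one {p : ℕ} (hp : 1 < p) : (p : ℝ) ^ (-(1 : ℝ) / ((p : ℝ) - 1)) < 1 := by
  have hp' : (1 : ℝ) < p := by exact_mod_cast hp
  exact Real.rpow_lt_one_of_one_lt_of_neg hp' (div_neg_of_neg_of_pos (by norm_num) (by linarith))

lemma pow_pred_lt_inv_of_lt_rpow {p : ℕ} (hp : 1 < p) {x : ℝ} (hx0 : 0 ≤ x)
    (hx : x < (p : ℝ) ^ (-(1 : ℝ) / ((p : ℝ) - 1))) : x ^ (p - 1) < (p : ℝ)⁻¹ := by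
  have hp' : (1 : ℝ) < p := by exact_mod_cast hp
  calc x ^ (p - 1) < ((p : ℝ) ^ (-(1 : ℝ) / ((p : ℝ) - 1))) ^ (p - 1) :=
        pow_lt_pow_left₀ hx hx0 (by omega)
    _ = (p : ℝ)⁻¹ := by
        rw [← Real.rpow_natCast, ← Real.rpow_mul (by positivity), Nat.cast_pred (by omega),
          div_mul_cancel₀ _ (by linarith), Real.rpow_neg_one]

lemma PadicInt.pow_dvd_natCast_sub_natCast_iff {p : ℕ} [Fact p.Prime] {N a b : ℕ} :
    (p : ℤ_[p]) ^ N ∣ (a : ℤ_[p]) - b ↔ a ≡ b [MOD p ^ N] := by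
  rw [← Ideal.mem_span_singleton, ← PadicInt.ker_toZModPow, RingHom.sub_mem_ker_iff, map_natCast,
    map_natCast, ZMod.natCast_eq_natCast_iff]

lemma sum_range_mul_eq_sum_sum {M : Type*} [AddCommMonoid M] (f : ℕ → M) (m n : ℕ) :
    ∑ x ∈ range (m * n), f x = ∑ j ∈ range n, ∑ y ∈ range m, f (m * j + y) := by
  induction n with
  | zero => simp
  | succ n ih => rw [Nat.mul_succ, sum_range_add, ih, sum_range_succ]

lemma sum_filter_dvd_range_mul {M : Type*} [AddCommMonoid M] (f : ℕ → M) {p : ℕ} (hp : 0 < p)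
    (m : ℕ) : ∑ x ∈ (range (p * m)).filter (p ∣ ·), f x = ∑ y ∈ range m, f (p * y) := by
  rw [sum_filter, sum_range_mul_eq_sum_sum]
  refine sum_congr rfl fun j _ => ?_
  rw [sum_eq_single_of_mem 0 (mem_range.mpr hp) fun y hy hy0 => if_neg ?_]
  · simp
  · exact fun hdvd => Nat.not_dvd_of_pos_of_lt (Nat.pos_of_ne_zero hy0) (mem_range.mp hy)
      ((Nat.dvd_add_right (dvd_mul_right p j)).mp hdvd)

section RiemannSum

variable {K : Type*} [NormedField K]

/-- The mass of `x + m ℤ_p` under `μ_u` is `(1 - u) u^x / (1 - u^m)`. -/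
def riemannSum (u : K) (g : ℕ → K) (m : ℕ) : K :=
  (1 - u) / (1 - u ^ m) * ∑ x ∈ range m, g x * u ^ x

variable {u : K} (hu : ∀ f : ℕ, 1 ≤ f → 1 ≤ ‖1 - u ^ f‖)
include hu

lemma one_sub_pow_ne_zero {f : ℕ} (hf : 0 < f) : 1 - u ^ f ≠ 0 :=
  norm_pos_iff.mp (one_pos.trans_le (hu f hf))

lemma riemannSum_mul_sub_riemannSum (g : ℕ → K) (m : ℕ) {b : ℕ} (hb : 0 < b) :
    riemannSum u g (m * b) - riemannSum u g m =
      ∑ j ∈ range b, ∑ y ∈ range m,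
        (1 - u) / (1 - u ^ (m * b)) * u ^ (m * j + y) * (g (m * j + y) - g y) := by
  rcases Nat.eq_zero_or_pos m with rfl | hm
  · simp [riemannSum]
  have hgeom :
      (1 - u) / (1 - u ^ m) = (1 - u) / (1 - u ^ (m * b)) * ∑ j ∈ range b, u ^ (m * j) := by
    have hsum := geom_sum_mul_neg (u ^ m) b
    simp only [← pow_mul] at hsum
    rw [eq_div_of_mul_eq (one_sub_pow_ne_zero hu hm) hsum,
      div_mul_div_cancel₀ (one_sub_pow_ne_zero hu (Nat.mul_pos hm hb))]
  rw [riemannSum, riemannSum, hgeom, sum_range_mul_eq_sum_sum _ m b, mul_assoc, sum_mul, mul_sum,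
    mul_sum, ← sum_sub_distrib]
  refine sum_congr rfl fun j _ => ?_
  simp only [mul_sum, ← sum_sub_distrib]
  refine sum_congr rfl fun y _ => ?_
  rw [pow_add]
  ring

variable [IsUltrametricDist K]

lemma norm_div_one_sub_pow_mul_pow_le_one {m x : ℕ} (hx : x < m) :
    ‖(1 - u) / (1 - u ^ m) * u ^ x‖ ≤ 1 := by
  have hm := hu m (by omega)
  rw [norm_mul, norm_div, norm_pow]
  rcases le_or_gt ‖u‖ 1 with h | h
  · have hnum : ‖1 - u‖ ≤ 1 := by
      rw [sub_eq_add_neg]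
      refine (IsUltrametricDist.norm_add_le_max _ _).trans ?_
      rw [norm_one, norm_neg]
      exact max_le le_rfl h
    exact mul_le_one₀ (div_le_one_of_le₀ (hnum.trans hm) (norm_nonneg _)) (pow_nonneg
      (norm_nonneg _) x) (pow_le_one₀ (norm_nonneg _) h)
  · have hbig {f : ℕ} (hf : 1 ≤ f) : ‖1 - u ^ f‖ = ‖u‖ ^ f := by
      have hgt : 1 < ‖u ^ f‖ := by rw [norm_pow]; exact one_lt_pow₀ h (by omega)
      rw [sub_eq_add_neg, IsUltrametricDist.norm_add_eq_max_of_norm_ne_norm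
        (by rw [norm_one, norm_neg]; exact hgt.ne), norm_one, norm_neg, max_eq_right hgt.le,
        norm_pow]
    have h1 : ‖1 - u‖ = ‖u‖ := by simpa using hbig (le_refl 1)
    rw [h1, hbig (by omega), div_mul_eq_mul_div, ← pow_succ']
    exact div_le_one_of_le₀ (pow_le_pow_right₀ h.le hx) (by positivity)

lemma norm_riemannSum_mul_sub_le {g : ℕ → K} {m b : ℕ} (hb : 0 < b) {ε : ℝ}
    (hg : ∀ x y, x ≡ y [MOD m] → ‖g x - g y‖ ≤ ε) :
    ‖riemannSum u g (m * b) - riemannSum u g m‖ ≤ ε := by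
  have hε : 0 ≤ ε := (norm_nonneg _).trans (hg 0 0 rfl)
  rw [riemannSum_mul_sub_riemannSum hu g m hb]
  refine IsUltrametricDist.norm_sum_le_of_forall_le_of_nonneg hε fun j hj => ?_
  refine IsUltrametricDist.norm_sum_le_of_forall_le_of_nonneg hε fun y hy => ?_
  rw [mem_range] at hj hy
  have hlt : m * j + y < m * b := by nlinarith
  have hmod : m * j + y ≡ y [MOD m] := by simp [Nat.ModEq]
  rw [norm_mul]
  simpa using mul_le_mul (norm_div_one_sub_pow_mul_pow_le_one hu hlt) (hg _ _ hmod)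
    (norm_nonneg _) zero_le_one

lemma cauchySeq_riemannSum {g : ℕ → K} {d n : ℕ} (hn : 0 < n) {r : ℝ} (hr : r < 1)
    (hg : ∀ N x y, x ≡ y [MOD d * n ^ N] → ‖g x - g y‖ ≤ r ^ N) :
    CauchySeq fun N => riemannSum u g (d * n ^ N) :=
  cauchySeq_of_le_geometric r 1 hr fun N => by
    rw [dist_comm, dist_eq_norm, one_mul, pow_succ, ← mul_assoc]
    exact norm_riemannSum_mul_sub_le hu hn (hg N)

end RiemannSum

section PrimePower

variable {p : ℕ} [hp : Fact p.Prime] {K : Type*} [NormedField K] [IsUltrametricDist K]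

lemma norm_pow_mul_choose_lt (hpK : ‖(p : K)‖ = (p : ℝ)⁻¹) {t : K} (ht0 : 0 < ‖t‖)
    (ht : ‖t‖ < (p : ℝ) ^ (-(1 : ℝ) / ((p : ℝ) - 1))) {i : ℕ} (hi2 : 2 ≤ i) (hip : i ≤ p) :
    ‖t ^ i * (p.choose i : K)‖ < (p : ℝ)⁻¹ * ‖t‖ := by
  have hp1 := hp.out.one_lt
  have ht1 : ‖t‖ < 1 := ht.trans (rpow_neg_inv_pred_lt_one hp1)
  rw [norm_mul, norm_pow]
  rcases hip.lt_or_eq with hip | rfl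
  · obtain ⟨c, hc⟩ := hp.out.dvd_choose_self (by omega) hip
    have hchoose : ‖(p.choose i : K)‖ ≤ (p : ℝ)⁻¹ := by
      rw [hc, Nat.cast_mul, norm_mul, hpK]
      exact mul_le_of_le_one_right (by positivity) (IsUltrametricDist.norm_natCast_le_one K c)
    calc ‖t‖ ^ i * ‖(p.choose i : K)‖ ≤ ‖t‖ ^ 2 * (p : ℝ)⁻¹ :=
          mul_le_mul (pow_le_pow_of_le_one (norm_nonneg _) ht1.le hi2) hchoose
            (norm_nonneg _) (by positivity)
      _ < ‖t‖ * (p : ℝ)⁻¹ := mul_lt_mul_of_pos_right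
          (pow_lt_self_of_lt_one₀ ht0 ht1 one_lt_two) (by positivity)
      _ = (p : ℝ)⁻¹ * ‖t‖ := mul_comm _ _
  · rw [Nat.choose_self, Nat.cast_one, norm_one, mul_one, ← pow_sub_one_mul hp.out.ne_zero]
    exact mul_lt_mul_of_pos_right (pow_pred_lt_inv_of_lt_rpow hp1 (norm_nonneg _) ht) ht0

lemma norm_add_one_pow_prime_sub_one (hpK : ‖(p : K)‖ = (p : ℝ)⁻¹) {t : K} (ht0 : 0 < ‖t‖)
    (ht : ‖t‖ < (p : ℝ) ^ (-(1 : ℝ) / ((p : ℝ) - 1))) :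
    ‖(t + 1) ^ p - 1‖ = (p : ℝ)⁻¹ * ‖t‖ := by
  have hp2 := hp.out.two_le
  have hexpand : (t + 1) ^ p - 1 = t * p + ∑ i ∈ Ico 2 (p + 1), t ^ i * (p.choose i : K) := by
    rw [add_pow, range_eq_Ico, sum_eq_sum_Ico_succ_bot (show 0 < p + 1 by omega),
      sum_eq_sum_Ico_succ_bot (show 1 < p + 1 by omega)]
    simp
  have hlinear : ‖t * p‖ = (p : ℝ)⁻¹ * ‖t‖ := by rw [norm_mul, hpK, mul_comm]
  obtain ⟨i, hi, hsum⟩ := IsUltrametricDist.exists_norm_finsetSum_le_of_nonempty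
    (nonempty_Ico.mpr (show 2 < p + 1 by omega)) fun i => t ^ i * (p.choose i : K)
  rw [mem_Ico] at hi
  have hsmall : ‖∑ i ∈ Ico 2 (p + 1), t ^ i * (p.choose i : K)‖ < ‖t * p‖ := by
    rw [hlinear]
    exact hsum.trans_lt (norm_pow_mul_choose_lt hpK ht0 ht hi.1 (by omega))
  rw [hexpand, IsUltrametricDist.norm_add_eq_max_of_norm_ne_norm hsmall.ne', max_eq_left hsmall.le,
    hlinear]

end PrimePower

def InQDisc (p : ℕ) {K : Type*} [NormedField K] (q : K) : Prop :=
  0 < ‖1 - q‖ ∧ ‖1 - q‖ < (p : ℝ) ^ (-(1 : ℝ) / ((p : ℝ) - 1))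

namespace InQDisc

variable {p : ℕ} [hp : Fact p.Prime] {K : Type*} [NormedField K] [IsUltrametricDist K] {q : K}

lemma norm_le_one (hq : InQDisc p q) : ‖q‖ ≤ 1 :=
  norm_le_one_of_norm_one_sub_le_one (hq.2.trans (rpow_neg_inv_pred_lt_one hp.out.one_lt)).le

lemma norm_one_sub_pow_prime (hpK : ‖(p : K)‖ = (p : ℝ)⁻¹) (hq : InQDisc p q) :
    ‖1 - q ^ p‖ = (p : ℝ)⁻¹ * ‖1 - q‖ := by
  obtain ⟨h0, h1⟩ := hq
  rw [norm_sub_rev 1 q] at h0 h1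
  rw [norm_sub_rev, norm_sub_rev 1 q]
  simpa using norm_add_one_pow_prime_sub_one hpK h0 h1

lemma pow_prime (hpK : ‖(p : K)‖ = (p : ℝ)⁻¹) (hq : InQDisc p q) : InQDisc p (q ^ p) := by
  have hp1 : (1 : ℝ) ≤ p := by exact_mod_cast hp.out.one_lt.le
  rw [InQDisc, hq.norm_one_sub_pow_prime hpK]
  exact ⟨mul_pos (by positivity) hq.1,
    (mul_le_of_le_one_left (norm_nonneg _) (inv_le_one_of_one_le₀ hp1)).trans_lt hq.2⟩

lemma norm_one_sub_pow_prime_pow (hpK : ‖(p : K)‖ = (p : ℝ)⁻¹) (hq : InQDisc p q) (N : ℕ) :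
    ‖1 - q ^ p ^ N‖ = (p : ℝ)⁻¹ ^ N * ‖1 - q‖ := by
  induction N generalizing q with
  | zero => simp
  | succ N ih =>
    rw [pow_succ', pow_mul, ih (hq.pow_prime hpK), hq.norm_one_sub_pow_prime hpK, pow_succ,
      mul_assoc]

lemma norm_pow_sub_pow_le_of_modEq (hpK : ‖(p : K)‖ = (p : ℝ)⁻¹) (hq : InQDisc p q)
    {N a b : ℕ} (h : a ≡ b [MOD p ^ N]) : ‖q ^ a - q ^ b‖ ≤ (p : ℝ)⁻¹ ^ N * ‖1 - q‖ := by
  wlog hba : b ≤ a generalizing a b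
  · rw [norm_sub_rev]
    exact this h.symm (le_of_not_ge hba)
  obtain ⟨s, hs⟩ := (Nat.modEq_iff_dvd' hba).mp h.symm
  have hpow_le {n : ℕ} : ‖q ^ n‖ ≤ 1 := by
    rw [norm_pow]
    exact pow_le_one₀ (norm_nonneg _) hq.norm_le_one
  calc ‖q ^ a - q ^ b‖ = ‖q ^ b‖ * ‖(q ^ p ^ N) ^ s - 1 ^ s‖ := by
        rw [← norm_mul, one_pow, mul_sub, mul_one, ← pow_mul, ← pow_add, ← hs,
          Nat.add_sub_cancel' hba]
    _ ≤ 1 * ‖q ^ p ^ N - 1‖ :=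
        mul_le_mul hpow_le (norm_pow_sub_pow_le_norm_sub hpow_le norm_one.le s) (norm_nonneg _)
          zero_le_one
    _ = (p : ℝ)⁻¹ ^ N * ‖1 - q‖ := by rw [one_mul, norm_sub_rev, hq.norm_one_sub_pow_prime_pow hpK]

end InQDisc

noncomputable def qIntegrand {p : ℕ} [Fact p.Prime] {K : Type*} [NormedField K] {d : ℕ}
    (χ : DirichletCharacter K d) (a1 : ℤ_[p]) (k : ℕ) (q : K) (x : ℕ) : K :=
  χ (x : ZMod d) * qnum q (a1 * (x : ℤ_[p])) ^ k

namespace InQDisc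

variable {p : ℕ} [hp : Fact p.Prime] {K : Type*} [NormedField K] [IsUltrametricDist K]
  [CompleteSpace K] {q : K} {d : ℕ} (χ : DirichletCharacter K d) (a1 : ℤ_[p]) (k : ℕ)

lemma tendsto_pow_appr (hpK : ‖(p : K)‖ = (p : ℝ)⁻¹) (hq : InQDisc p q) (z : ℤ_[p]) :
    Tendsto (fun N => q ^ z.appr N) atTop (𝓝 (qpow q z)) := by
  have hcauchy : CauchySeq fun N => q ^ z.appr N := by
    refine cauchySeq_of_le_geometric (p : ℝ)⁻¹ ‖1 - q‖
      (inv_lt_one_of_one_lt₀ (by exact_mod_cast hp.out.one_lt)) fun N => ?_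
    rw [dist_eq_norm, mul_comm]
    exact hq.norm_pow_sub_pow_le_of_modEq hpK ((Nat.modEq_iff_dvd' (z.appr_mono N.le_succ)).mpr
      (z.dvd_appr_sub_appr N (N + 1) N.le_succ))
  obtain ⟨L, hL⟩ := cauchySeq_tendsto_of_complete hcauchy
  rwa [qpow, hL.limUnder_eq]

lemma norm_qpow_sub_pow_le (hpK : ‖(p : K)‖ = (p : ℝ)⁻¹) (hq : InQDisc p q) {z : ℤ_[p]}
    {N a : ℕ} (h : (p : ℤ_[p]) ^ N ∣ z - a) : ‖qpow q z - q ^ a‖ ≤ (p : ℝ)⁻¹ ^ N * ‖1 - q‖ := by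
  refine le_of_tendsto ((hq.tendsto_pow_appr hpK z).sub_const _).norm ?_
  filter_upwards [eventually_ge_atTop N] with M hM
  refine hq.norm_pow_sub_pow_le_of_modEq hpK (PadicInt.pow_dvd_natCast_sub_natCast_iff.mp ?_)
  have happr : (p : ℤ_[p]) ^ N ∣ z - z.appr M :=
    (pow_dvd_pow _ hM).trans (Ideal.mem_span_singleton.mp (z.appr_spec M))
  simpa using dvd_sub h happr

lemma norm_qpow_sub_qpow_le (hpK : ‖(p : K)‖ = (p : ℝ)⁻¹) (hq : InQDisc p q) {z z' : ℤ_[p]}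
    {N : ℕ} (h : (p : ℤ_[p]) ^ N ∣ z - z') :
    ‖qpow q z - qpow q z'‖ ≤ (p : ℝ)⁻¹ ^ N * ‖1 - q‖ := by
  have happr : (p : ℤ_[p]) ^ N ∣ z' - z'.appr N := Ideal.mem_span_singleton.mp (z'.appr_spec N)
  rw [← dist_eq_norm]
  refine (dist_triangle_max _ (q ^ z'.appr N) _).trans (max_le ?_ ?_)
  · rw [dist_eq_norm]
    exact hq.norm_qpow_sub_pow_le hpK (by simpa using dvd_add h happr)
  · rw [dist_comm, dist_eq_norm]
    exact hq.norm_qpow_sub_pow_le hpK happr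

lemma qpow_natCast_mul (hpK : ‖(p : K)‖ = (p : ℝ)⁻¹) (hq : InQDisc p q) (w : ℤ_[p]) :
    qpow q ((p : ℤ_[p]) * w) = qpow (q ^ p) w := by
  refine tendsto_nhds_unique ?_ ((hq.pow_prime hpK).tendsto_pow_appr hpK w)
  have hbound : Tendsto (fun N : ℕ => (p : ℝ)⁻¹ ^ N * ‖1 - q‖) atTop (𝓝 0) := by
    simpa using (tendsto_pow_atTop_nhds_zero_of_lt_one (by positivity)
      (inv_lt_one_of_one_lt₀ (by exact_mod_cast hp.out.one_lt))).mul_const ‖1 - q‖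
  have hclose : Tendsto (fun N => qpow q ((p : ℤ_[p]) * w) - (q ^ p) ^ w.appr N) atTop (𝓝 0) := by
    refine squeeze_zero_norm (fun N => ?_) hbound
    rw [← pow_mul]
    refine hq.norm_qpow_sub_pow_le hpK ?_
    have happr : (p : ℤ_[p]) ^ N ∣ w - w.appr N := Ideal.mem_span_singleton.mp (w.appr_spec N)
    simpa [mul_sub] using happr.mul_left (p : ℤ_[p])
  simpa using (tendsto_const_nhds (x := qpow q ((p : ℤ_[p]) * w))).sub hclose

lemma norm_one_sub_qpow_le (hpK : ‖(p : K)‖ = (p : ℝ)⁻¹) (hq : InQDisc p q) (z : ℤ_[p]) :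
    ‖1 - qpow q z‖ ≤ ‖1 - q‖ := by
  simpa [norm_sub_rev] using hq.norm_qpow_sub_pow_le hpK (N := 0) (a := 0) (one_dvd (z - 0))

lemma norm_qnum_le_one (hpK : ‖(p : K)‖ = (p : ℝ)⁻¹) (hq : InQDisc p q) (z : ℤ_[p]) :
    ‖qnum q z‖ ≤ 1 := by
  rw [qnum, norm_div]
  exact div_le_one_of_le₀ (hq.norm_one_sub_qpow_le hpK z) (norm_nonneg _)

lemma norm_qnum_sub_qnum_le (hpK : ‖(p : K)‖ = (p : ℝ)⁻¹) (hq : InQDisc p q) {z z' : ℤ_[p]}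
    {N : ℕ} (h : (p : ℤ_[p]) ^ N ∣ z - z') : ‖qnum q z - qnum q z'‖ ≤ (p : ℝ)⁻¹ ^ N := by
  rw [qnum, qnum, div_sub_div_same, sub_sub_sub_cancel_left, norm_div, div_le_iff₀ hq.1,
    norm_sub_rev]
  exact hq.norm_qpow_sub_qpow_le hpK h

lemma qnum_natCast_mul (hpK : ‖(p : K)‖ = (p : ℝ)⁻¹) (hq : InQDisc p q) (w : ℤ_[p]) :
    qnum q ((p : ℤ_[p]) * w) = (1 - q ^ p) / (1 - q) * qnum (q ^ p) w := by
  rw [qnum, qnum, hq.qpow_natCast_mul hpK,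
    div_mul_div_cancel₀' (norm_pos_iff.mp (hq.pow_prime hpK).1)]

lemma norm_qIntegrand_sub_le (hpK : ‖(p : K)‖ = (p : ℝ)⁻¹) (hq : InQDisc p q) {N x y : ℕ}
    (h : x ≡ y [MOD d * p ^ N]) :
    ‖qIntegrand χ a1 k q x - qIntegrand χ a1 k q y‖ ≤ (p : ℝ)⁻¹ ^ N := by
  have hχ : χ x = χ y := by rw [(ZMod.natCast_eq_natCast_iff _ _ _).mpr (h.of_mul_right _)]
  have hdvd : (p : ℤ_[p]) ^ N ∣ a1 * x - a1 * y := by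
    rw [← mul_sub]
    exact dvd_mul_of_dvd_right (PadicInt.pow_dvd_natCast_sub_natCast_iff.mpr (h.of_mul_left _)) _
  rw [qIntegrand, qIntegrand, hχ, ← mul_sub, norm_mul]
  simpa using mul_le_mul (χ.norm_le_one _) ((norm_pow_sub_pow_le_norm_sub
    (hq.norm_qnum_le_one hpK _) (hq.norm_qnum_le_one hpK _) k).trans
    (hq.norm_qnum_sub_qnum_le hpK hdvd)) (norm_nonneg _) zero_le_one

lemma exists_tendsto_riemannSum_qIntegrand (hpK : ‖(p : K)‖ = (p : ℝ)⁻¹) {u : K}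
    (hu : ∀ f : ℕ, 1 ≤ f → 1 ≤ ‖1 - u ^ f‖) (hq : InQDisc p q) :
    ∃ L, Tendsto (fun N => riemannSum u (qIntegrand χ a1 k q) (d * p ^ N)) atTop (𝓝 L) :=
  cauchySeq_tendsto_of_complete <| cauchySeq_riemannSum hu hp.out.pos
    (inv_lt_one_of_one_lt₀ (by exact_mod_cast hp.out.one_lt))
    fun _ _ _ h => hq.norm_qIntegrand_sub_le χ a1 k hpK h

lemma qIntegrand_prime_mul (hpK : ‖(p : K)‖ = (p : ℝ)⁻¹) (hq : InQDisc p q) (y : ℕ) :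
    qIntegrand χ a1 k q (p * y) =
      χ p * ((1 - q ^ p) / (1 - q)) ^ k * qIntegrand χ a1 k (q ^ p) y := by
  have hcast : a1 * ((p * y : ℕ) : ℤ_[p]) = p * (a1 * y) := by push_cast; ring
  rw [qIntegrand, qIntegrand, hcast, hq.qnum_natCast_mul hpK, Nat.cast_mul, map_mul, mul_pow]
  ring

lemma sum_filter_not_dvd_eq_riemannSum_sub (hpK : ‖(p : K)‖ = (p : ℝ)⁻¹) {u : K}
    (hu : ∀ f : ℕ, 1 ≤ f → 1 ≤ ‖1 - u ^ f‖) (hq : InQDisc p q) (m : ℕ) :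
    (1 - u) / (1 - u ^ (p * m)) *
        ∑ x ∈ (range (p * m)).filter (fun x => ¬ p ∣ x), qIntegrand χ a1 k q x * u ^ x =
      riemannSum u (qIntegrand χ a1 k q) (p * m) -
        χ p * ((1 - q ^ p) / (1 - q)) ^ k * ((1 - u) / (1 - u ^ p)) *
          riemannSum (u ^ p) (qIntegrand χ a1 k (q ^ p)) m := by
  have hsplit := sum_filter_add_sum_filter_not (range (p * m)) (p ∣ ·)
    fun x => qIntegrand χ a1 k q x * u ^ x
  have hdvd : ∑ x ∈ (range (p * m)).filter (p ∣ ·), qIntegrand χ a1 k q x * u ^ x =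
      χ p * ((1 - q ^ p) / (1 - q)) ^ k *
        ∑ y ∈ range m, qIntegrand χ a1 k (q ^ p) y * (u ^ p) ^ y := by
    rw [sum_filter_dvd_range_mul _ hp.out.pos, mul_sum]
    refine sum_congr rfl fun y _ => ?_
    rw [qIntegrand_prime_mul χ a1 k hpK hq, pow_mul]
    ring
  have hprefactor : (1 - u) / (1 - u ^ p) * ((1 - u ^ p) / (1 - (u ^ p) ^ m)) =
      (1 - u) / (1 - u ^ (p * m)) := by
    rw [← pow_mul, div_mul_div_cancel₀ (one_sub_pow_ne_zero hu hp.out.pos)]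
  rw [riemannSum, riemannSum, ← hsplit, hdvd, ← hprefactor]
  ring

end InQDisc

theorem integral_units_part_eq_general
    {p : ℕ} [Fact p.Prime] {K : Type*} [NormedField K] [CompleteSpace K]
    [IsUltrametricDist K] (hpK : ‖(p : K)‖ = (p : ℝ)⁻¹)
    (a1 : ℤ_[p])
    (u q : K) (hu : ∀ f : ℕ, 1 ≤ f → 1 ≤ ‖1 - u ^ f‖)
    (hq0 : 0 < ‖1 - q‖) (hq1 : ‖1 - q‖ < (p : ℝ) ^ (-(1 : ℝ) / ((p : ℝ) - 1)))
    (d : ℕ) (χ : DirichletCharacter K d) (k : ℕ) :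
    ∃ L Lfull Lp : K,
      Tendsto
        (fun N : ℕ =>
          ((1 - u) / (1 - u ^ (d * p ^ N))) *
            ∑ x ∈ (Finset.range (d * p ^ N)).filter fun x => ¬ p ∣ x,
              χ ((x : ZMod d)) * (qnum q (a1 * (x : ℤ_[p]))) ^ k * u ^ x)
        atTop (nhds L) ∧
      Tendsto
        (fun N : ℕ =>
          ((1 - u) / (1 - u ^ (d * p ^ N))) *
            ∑ x ∈ Finset.range (d * p ^ N),
              χ ((x : ZMod d)) * (qnum q (a1 * (x : ℤ_[p]))) ^ k * u ^ x)
        atTop (nhds Lfull) ∧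
      Tendsto
        (fun N : ℕ =>
          ((1 - u ^ p) / (1 - (u ^ p) ^ (d * p ^ N))) *
            ∑ x ∈ Finset.range (d * p ^ N),
              χ ((x : ZMod d)) * (qnum (q ^ p) (a1 * (x : ℤ_[p]))) ^ k * (u ^ p) ^ x)
        atTop (nhds Lp) ∧
      L = Lfull -
        χ ((p : ZMod d)) * ((1 - q ^ p) / (1 - q)) ^ k * ((1 - u) / (1 - u ^ p)) * Lp := by
  have hq : InQDisc p q := ⟨hq0, hq1⟩
  have hup : ∀ f : ℕ, 1 ≤ f → 1 ≤ ‖1 - (u ^ p) ^ f‖ := fun f hf => by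
    rw [← pow_mul]
    exact hu _ (Nat.mul_pos (Fact.out : p.Prime).pos hf)
  obtain ⟨Lfull, hfull⟩ := hq.exists_tendsto_riemannSum_qIntegrand χ a1 k hpK hu
  obtain ⟨Lp, hLp⟩ := (hq.pow_prime hpK).exists_tendsto_riemannSum_qIntegrand χ a1 k hpK hup
  set C := χ (p : ZMod d) * ((1 - q ^ p) / (1 - q)) ^ k * ((1 - u) / (1 - u ^ p))
  refine ⟨Lfull - C * Lp, Lfull, Lp, ?_, hfull, hLp, rfl⟩
  refine (hfull.sub ((hLp.comp (tendsto_sub_atTop_nat 1)).const_mul C)).congr' ?_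
  filter_upwards [eventually_ge_atTop 1] with N hN
  obtain ⟨M, rfl⟩ := Nat.exists_eq_add_of_le' hN
  rw [show d * p ^ (M + 1) = p * (d * p ^ M) by ring]
  exact (hq.sum_filter_not_dvd_eq_riemannSum_sub χ a1 k hpK hu (d * p ^ M)).symm

/-- **removing the `p`-part of the integral.** For `k ≥ 0`, the limit
`∫_{X^*} χ(x)[a_1 x:q]^k dμ_u(x)
  = lim_N ((1-u)/(1-u^{d p^N})) ∑_{0 ≤ x < d p^N, p ∤ x} χ(x)[a_1 x:q]^k u^x`
exists and equals `I_χ(k;u,q) - χ(p) [p:q]^k ((1-u)/(1-u^p)) I_χ(k;u^p,q^p)`, where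
`I_χ(k;u',q') = lim_N ((1-u')/(1-u'^{d p^N})) ∑_{x=0}^{d p^N-1} χ(x)[a_1 x:q']^k u'^x`
(all three limits exist). -/
theorem integral_units_part_eq
    {p : ℕ} [Fact p.Prime] {K : Type*} [NormedField K] [CompleteSpace K]
    [IsUltrametricDist K] (hpK : ‖(p : K)‖ = (p : ℝ)⁻¹)
    (a1 : ℤ_[p]) (ha1 : a1 ≠ 0)
    (u q : K) (hu : ∀ f : ℕ, 1 ≤ f → 1 ≤ ‖1 - u ^ f‖)
    (hq0 : 0 < ‖1 - q‖) (hq1 : ‖1 - q‖ < (p : ℝ) ^ (-(1 : ℝ) / ((p : ℝ) - 1)))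
    (d : ℕ) (hd : 1 ≤ d) (χ : DirichletCharacter K d) (k : ℕ) :
    ∃ L Lfull Lp : K,
      Tendsto
        (fun N : ℕ =>
          ((1 - u) / (1 - u ^ (d * p ^ N))) *
            ∑ x ∈ (Finset.range (d * p ^ N)).filter fun x => ¬ p ∣ x,
              χ ((x : ZMod d)) * (qnum q (a1 * (x : ℤ_[p]))) ^ k * u ^ x)
        atTop (nhds L) ∧
      Tendsto
        (fun N : ℕ =>
          ((1 - u) / (1 - u ^ (d * p ^ N))) *
            ∑ x ∈ Finset.range (d * p ^ N),
              χ ((x : ZMod d)) * (qnum q (a1 * (x : ℤ_[p]))) ^ k * u ^ x)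
        atTop (nhds Lfull) ∧
      Tendsto
        (fun N : ℕ =>
          ((1 - u ^ p) / (1 - (u ^ p) ^ (d * p ^ N))) *
            ∑ x ∈ Finset.range (d * p ^ N),
              χ ((x : ZMod d)) * (qnum (q ^ p) (a1 * (x : ℤ_[p]))) ^ k * (u ^ p) ^ x)
        atTop (nhds Lp) ∧
      L = Lfull -
        χ ((p : ZMod d)) * ((1 - q ^ p) / (1 - q)) ^ k * ((1 - u) / (1 - u ^ p)) * Lp :=
  integral_units_part_eq_general hpK a1 u q hu hq0 hq1 d χ k
end
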